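/- arXiv:2210.06056 — 4 statements merged into one kernel-verified Lean document; each statement's English description precedes it below -/
import Mathlib

section
/- Let a_1 ≥ 0, a_2, …, a_{2m} ≥ 1 and c_1 ≥ 1, c_2, …, c_k ≥ 2 be integers such that the classical continued fraction values coincide in ℚ: [a_1,…,a_{2m}] = [[c_1,…,c_k]]. Then the left q-deformed regular and negative continued fraction expansions coincide in ℚ(q): [a_1,…,a_{2m}]^♭_q = [[c_1,…,c_k]]^♭_q. -/
noncomputable section

/-- The field ℚ(q) of rational functions over ℚ. -/
abbrev K : Type := RatFunc ℚ

/-- The variable q. -/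
def q : K := RatFunc.X

/-- Right q-integer `[n]^♯` with deformation parameter `x`. -/
def qsX (x : K) (n : ℤ) : K := (1 - x ^ n) / (1 - x)

/-- Left q-integer `[n]^♭` with deformation parameter `x`. -/
def qfX (x : K) (n : ℤ) : K := (1 - x ^ (n - 1) + x ^ n - x ^ (n + 1)) / (1 - x)

/-- Right q-integer `[n]^♯_q`. -/
def qs (n : ℤ) : K := qsX q n

/-- Left q-integer `[n]^♭_q`. -/
def qf (n : ℤ) : K := qfX q n

/-- Right q-deformed Euler continuant `E^♯` (first-row expansion of the
tridiagonal determinant), with parameter `x`. -/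
def EsharpX (x : K) : List ℤ → K
  | [] => 1
  | [c] => qsX x c
  | c :: d :: rest => qsX x c * EsharpX x (d :: rest) - x ^ (c - 1) * EsharpX x rest

/-- Left q-deformed Euler continuant `E^♭` (first-row expansion of the
tridiagonal determinant whose (k,k) entry is the left q-integer), with parameter `x`. -/
def EflatX (x : K) : List ℤ → K
  | [] => 1
  | [c] => qfX x c
  | c :: d :: rest => qsX x c * EflatX x (d :: rest) - x ^ (c - 1) * EflatX x rest

def Esharp (L : List ℤ) : K := EsharpX q L

def Eflat (L : List ℤ) : K := EflatX q L

/-- `E^♯_{j-1}(d_2,…,d_j)` for the input list `(d_1,…,d_j)`, with the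
convention `E^♯_{-1}() = 0` when the list is empty. -/
def EsharpD : List ℤ → K
  | [] => 0
  | _ :: rest => Esharp rest

/-- `E^♭_{j-1}(d_2,…,d_j)` for the input list `(d_1,…,d_j)`, with the
convention `E^♭_{-1}() = 1 - q` when the list is empty. -/
def EflatD : List ℤ → K
  | [] => 1 - q
  | _ :: rest => Eflat rest

/-- Left q-deformed negative continued fraction `[[c_1,…,c_k]]^♭_q`. -/
def nflat : List ℤ → K
  | [] => 0
  | [c] => qf c
  | c :: d :: rest => qs c - q ^ (c - 1) / nflat (d :: rest)

/-- Right q-deformed negative continued fraction `[[c_1,…,c_k]]^♯_q`. -/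
def nsharp : List ℤ → K
  | [] => 0
  | [c] => qs c
  | c :: d :: rest => qs c - q ^ (c - 1) / nsharp (d :: rest)

/-- Left q-deformed regular continued fraction, with alternating parameter `x`, `x⁻¹`. -/
def regFlatX : K → List ℤ → K
  | _, [] => 0
  | x, [a] => qfX x a
  | x, a :: d :: rest => qsX x a + x ^ a / regFlatX x⁻¹ (d :: rest)

/-- Left q-deformed regular continued fraction `[a_1,…,a_{2m}]^♭_q`. -/
def regFlat (L : List ℤ) : K := regFlatX q L

/-- Classical negative continued fraction `[[c_1,…,c_k]] ∈ ℚ`. -/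
def negCF : List ℤ → ℚ
  | [] => 0
  | [c] => c
  | c :: d :: rest => c - 1 / negCF (d :: rest)

/-- Classical regular continued fraction `[a_1,…,a_{2m}] ∈ ℚ`. -/
def regCF : List ℤ → ℚ
  | [] => 0
  | [a] => a
  | a :: d :: rest => a + 1 / regCF (d :: rest)

/-- The matrix σ_{1,q} as an invertible 2×2 matrix over ℚ(q). -/
def σ1 : (Matrix (Fin 2) (Fin 2) K)ˣ where
  val := !![q⁻¹, -q⁻¹; 0, 1]
  inv := !![q, 1; 0, 1]
  val_inv := by
    have hq : (q : K) ≠ 0 := RatFunc.X_ne_zero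
    ext i j
    fin_cases i <;> fin_cases j <;>
      simp [Matrix.mul_apply, Fin.sum_univ_two, inv_mul_cancel₀ hq]
  inv_val := by
    have hq : (q : K) ≠ 0 := RatFunc.X_ne_zero
    ext i j
    fin_cases i <;> fin_cases j <;>
      simp [Matrix.mul_apply, Fin.sum_univ_two, mul_inv_cancel₀ hq]

/-- The matrix σ_{2,q} as an invertible 2×2 matrix over ℚ(q). -/
def σ2 : (Matrix (Fin 2) (Fin 2) K)ˣ where
  val := !![1, 0; 1, q⁻¹]
  inv := !![1, 0; -q, q]
  val_inv := by
    have hq : (q : K) ≠ 0 := RatFunc.X_ne_zero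
    ext i j
    fin_cases i <;> fin_cases j <;>
      simp [Matrix.mul_apply, Fin.sum_univ_two, inv_mul_cancel₀ hq]
  inv_val := by
    have hq : (q : K) ≠ 0 := RatFunc.X_ne_zero
    ext i j
    fin_cases i <;> fin_cases j <;>
      simp [Matrix.mul_apply, Fin.sum_univ_two, mul_inv_cancel₀ hq]

/-- The matrix S_q as an invertible 2×2 matrix over ℚ(q). -/
def Sq : (Matrix (Fin 2) (Fin 2) K)ˣ where
  val := !![0, -q⁻¹; 1, 0]
  inv := !![0, 1; -q, 0]
  val_inv := by
    have hq : (q : K) ≠ 0 := RatFunc.X_ne_zero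
    ext i j
    fin_cases i <;> fin_cases j <;>
      simp [Matrix.mul_apply, Fin.sum_univ_two, inv_mul_cancel₀ hq]
  inv_val := by
    have hq : (q : K) ≠ 0 := RatFunc.X_ne_zero
    ext i j
    fin_cases i <;> fin_cases j <;>
      simp [Matrix.mul_apply, Fin.sum_univ_two, mul_inv_cancel₀ hq]

/-- The product σ_{1,q}^{-c_1}·S_q·σ_{1,q}^{-c_2}·S_q⋯σ_{1,q}^{-c_k}·S_q. -/
def prodCS : List ℤ → (Matrix (Fin 2) (Fin 2) K)ˣ
  | [] => 1
  | c :: rest => σ1 ^ (-c) * Sq * prodCS rest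

/-- The product σ_{1,q}^{-a_1}·σ_{2,q}^{a_2}⋯σ_{1,q}^{-a_{2m-1}}·σ_{2,q}^{a_{2m}}. -/
def prodReg : List ℤ → (Matrix (Fin 2) (Fin 2) K)ˣ
  | [] => 1
  | [a] => σ1 ^ (-a)
  | a :: b :: rest => σ1 ^ (-a) * σ2 ^ b * prodReg rest

/-- The sum a_2 + a_4 + ⋯ of the even-indexed entries. -/
def evenSum : List ℤ → ℤ
  | [] => 0
  | [_] => 0
  | _ :: b :: rest => b + evenSum rest

/-- Möbius action of a 2×2 matrix on ℚ(q). -/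
def mobius (A : Matrix (Fin 2) (Fin 2) K) (x : K) : K :=
  (A 0 0 * x + A 0 1) / (A 1 0 * x + A 1 1)

/-! ### Auxiliary development: real analogues and the evaluation homomorphism -/

/-- Real analogue of `qsX`. -/
def qsR (t : ℝ) (n : ℤ) : ℝ := (1 - t ^ n) / (1 - t)

/-- Real analogue of `qfX`. -/
def qfR (t : ℝ) (n : ℤ) : ℝ := (1 - t ^ (n - 1) + t ^ n - t ^ (n + 1)) / (1 - t)

/-- Real analogue of `nflat`. -/
def nflatR (t : ℝ) : List ℤ → ℝ
  | [] => 0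
  | [c] => qfR t c
  | c :: d :: rest => qsR t c - t ^ (c - 1) / nflatR t (d :: rest)

/-- Real analogue of `regFlatX`. -/
def regFlatR : ℝ → List ℤ → ℝ
  | _, [] => 0
  | t, [a] => qfR t a
  | t, a :: d :: rest => qsR t a + t ^ a / regFlatR t⁻¹ (d :: rest)

/-- A fixed positive transcendental real number. -/
def tval : ℝ := liouvilleNumber 3

lemma tval_pos : 0 < tval := by
  have hs : Summable fun i : ℕ => 1 / (3:ℝ) ^ (Nat.factorial i) := LiouvilleNumber.summable (by norm_num)
  have := Summable.tsum_pos hs (fun i => by positivity) 0 (by norm_num)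
  simpa [tval, liouvilleNumber] using this

lemma tval_transcendental : Transcendental ℚ tval := by
  have h : Transcendental ℤ (liouvilleNumber (3:ℕ)) :=
    transcendental_liouvilleNumber (by norm_num)
  have h' : Transcendental ℤ tval := by
    simpa [tval] using h
  exact (IsFractionRing.isAlgebraic_iff ℤ ℚ ℝ).not.mp h'

lemma tval_ne_one : tval ≠ 1 := fun h => tval_transcendental (h ▸ isAlgebraic_one)

lemma tval_ne_zero : tval ≠ 0 := ne_of_gt tval_pos

/-- Evaluation of rational functions at `tval`. -/
def ψ : K →+* ℝ :=
  IsFractionRing.lift (g := ((Polynomial.aeval tval).toRingHom : Polynomial ℚ →+* ℝ))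
    (by exact transcendental_iff_injective.mp tval_transcendental)

lemma psi_q : ψ q = tval := by
  rw [q, ← RatFunc.algebraMap_X (K := ℚ), ψ, IsFractionRing.lift_algebraMap]
  simp

lemma q_ne_zero : q ≠ 0 := RatFunc.X_ne_zero

lemma q_ne_one : q ≠ 1 := by
  intro h
  apply tval_ne_one
  rw [← psi_q, h, map_one]

lemma one_sub_q_ne_zero : (1 : K) - q ≠ 0 := by
  intro h
  exact q_ne_one (by linear_combination -h)

lemma one_sub_qinv_ne_zero : (1 : K) - q⁻¹ ≠ 0 := by
  intro h
  have : q⁻¹ = 1 := by linear_combination -h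
  exact q_ne_one (by rw [← inv_inv q, this, inv_one])

lemma psi_qinv : ψ q⁻¹ = tval⁻¹ := by rw [map_inv₀, psi_q]

lemma psi_qsX (x : K) (n : ℤ) : ψ (qsX x n) = qsR (ψ x) n := by
  simp [qsX, qsR, map_div₀, map_zpow₀]

lemma psi_qfX (x : K) (n : ℤ) : ψ (qfX x n) = qfR (ψ x) n := by
  simp [qfX, qfR, map_div₀, map_zpow₀]

lemma psi_nflat (L : List ℤ) : ψ (nflat L) = nflatR tval L := by
  induction L using nflat.induct with
  | case1 => simp [nflat, nflatR]
  | case2 c => simp [nflat, nflatR, qf, psi_qfX, psi_q]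
  | case3 c d rest ih =>
      simp [nflat, nflatR, qs, map_div₀, map_zpow₀, psi_qsX, psi_q, ih]

lemma psi_regFlatX (x : K) (L : List ℤ) : ψ (regFlatX x L) = regFlatR (ψ x) L := by
  induction x, L using regFlatX.induct with
  | case1 x => simp [regFlatX, regFlatR]
  | case2 x a => simp [regFlatX, regFlatR, psi_qfX]
  | case3 x a d rest ih =>
      simp [regFlatX, regFlatR, map_div₀, map_zpow₀, psi_qsX, map_inv₀, ih]

/-! ### Elementary zpow lemmas -/

lemma zpow_succ_mul' {G₀ : Type*} [GroupWithZero G₀] (a : G₀) (ha : a ≠ 0) (n : ℤ) :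
    a ^ (n + 1) = a ^ n * a := by rw [zpow_add₀ ha, zpow_one]

lemma zpow_pred_mul' {G₀ : Type*} [GroupWithZero G₀] (a : G₀) (ha : a ≠ 0) (n : ℤ) :
    a ^ n = a ^ (n - 1) * a := by
  conv_lhs => rw [show n = n - 1 + 1 by ring]
  rw [zpow_add₀ ha, zpow_one]

/-! ### Real positivity lemmas -/

lemma qsR_succ {t : ℝ} (ht0 : t ≠ 0) (ht1 : (1:ℝ) - t ≠ 0) (n : ℤ) :
    qsR t (n + 1) = qsR t n + t ^ n := by
  rw [qsR, qsR, zpow_succ_mul' t ht0]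
  field_simp
  ring

lemma qsR_nonneg {t : ℝ} (ht : 0 < t) (ht1 : (1:ℝ) - t ≠ 0) {n : ℤ} (hn : 0 ≤ n) :
    0 ≤ qsR t n := by
  refine Int.le_induction (motive := fun k _ => 0 ≤ qsR t k) ?_ ?_ n hn
  · simp [qsR]
  · intro n _ ih
    rw [qsR_succ (ne_of_gt ht) ht1]
    have h2 : (0:ℝ) < t ^ n := zpow_pos ht n
    linarith

lemma qsR_ge_one {t : ℝ} (ht : 0 < t) (ht1 : (1:ℝ) - t ≠ 0) {n : ℤ} (hn : 1 ≤ n) :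
    1 ≤ qsR t n := by
  refine Int.le_induction (motive := fun k _ => 1 ≤ qsR t k) ?_ ?_ n hn
  · show (1:ℝ) ≤ qsR t 1
    rw [qsR, zpow_one, div_self ht1]
  · intro n _ ih
    rw [qsR_succ (ne_of_gt ht) ht1]
    have h2 : (0:ℝ) < t ^ n := zpow_pos ht n
    linarith

lemma qsR_ge_two {t : ℝ} (ht : 0 < t) (ht1 : (1:ℝ) - t ≠ 0) {n : ℤ} (hn : 2 ≤ n) :
    1 + t ^ (n - 1) ≤ qsR t n := by
  refine Int.le_induction (motive := fun k _ => 1 + t ^ (k - 1) ≤ qsR t k) ?_ ?_ n hn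
  · show (1:ℝ) + t ^ ((2:ℤ) - 1) ≤ qsR t 2
    have e : t ^ (2:ℤ) = t * t := by
      rw [show (2:ℤ) = 1 + 1 by norm_num, zpow_add₀ (ne_of_gt ht), zpow_one]
    rw [qsR, e, show (2:ℤ) - 1 = 1 by norm_num, zpow_one]
    rw [show (1:ℝ) - t * t = (1 + t) * (1 - t) by ring, mul_div_assoc, div_self ht1, mul_one]
  · intro n hn2 ih
    rw [qsR_succ (ne_of_gt ht) ht1]
    have h2 : (0:ℝ) ≤ t ^ (n - 1) := le_of_lt (zpow_pos ht _)
    have h3 : (0:ℝ) < t ^ n := zpow_pos ht _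
    have h4 : t ^ (n + 1 - 1) = t ^ n := by norm_num
    rw [h4]
    linarith

lemma qfR_eq {t : ℝ} (ht0 : t ≠ 0) (ht1 : (1:ℝ) - t ≠ 0) (n : ℤ) :
    qfR t n = qsR t (n - 1) + t ^ n := by
  rw [qfR, qsR, zpow_succ_mul' t ht0 n, zpow_pred_mul' t ht0 n]
  field_simp
  ring

lemma nflatR_gt_one {t : ℝ} (ht : 0 < t) (ht1 : (1:ℝ) - t ≠ 0) (L : List ℤ) :
    L ≠ [] → (∀ c ∈ L, 2 ≤ c) → 1 < nflatR t L := by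
  induction L using nflatR.induct with
  | case1 => intro h; exact absurd rfl h
  | case2 c =>
      intro _ h
      have hc : 2 ≤ c := h c (by simp)
      rw [nflatR, qfR_eq (ne_of_gt ht) ht1]
      have h1 : 1 ≤ qsR t (c - 1) := qsR_ge_one ht ht1 (by omega)
      have h2 : (0:ℝ) < t ^ c := zpow_pos ht _
      linarith
  | case3 c d rest ih =>
      intro _ h
      have hy : 1 < nflatR t (d :: rest) := ih (by simp) (fun x hx => h x (by simp [hx]))
      have hc : 2 ≤ c := h c (by simp)
      rw [nflatR]
      have h1 : 1 + t ^ (c - 1) ≤ qsR t c := qsR_ge_two ht ht1 hc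
      have h2 : (0:ℝ) < t ^ (c - 1) := zpow_pos ht _
      have h3 : t ^ (c - 1) / nflatR t (d :: rest) < t ^ (c - 1) :=
        div_lt_self h2 hy
      linarith

lemma regFlatR_pos (t : ℝ) (L : List ℤ) :
    0 < t → (1:ℝ) - t ≠ 0 → L ≠ [] → (∀ c ∈ L, 1 ≤ c) → 0 < regFlatR t L := by
  induction t, L using regFlatR.induct with
  | case1 t => intro _ _ h _; exact absurd rfl h
  | case2 t a =>
      intro ht ht1 _ h
      have ha : 1 ≤ a := h a (by simp)
      rw [regFlatR, qfR_eq (ne_of_gt ht) ht1]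
      have h1 : 0 ≤ qsR t (a - 1) := qsR_nonneg ht ht1 (by omega)
      have h2 : (0:ℝ) < t ^ a := zpow_pos ht _
      linarith
  | case3 t a d rest ih =>
      intro ht ht1 _ h
      have hti : 0 < t⁻¹ := inv_pos.mpr ht
      have hti1 : (1:ℝ) - t⁻¹ ≠ 0 := by
        intro hh
        have : t⁻¹ = 1 := by linarith
        have : t = 1 := by rw [← inv_inv t, this, inv_one]
        apply ht1; rw [this]; ring
      have hy : 0 < regFlatR t⁻¹ (d :: rest) :=
        ih hti hti1 (by simp) (fun x hx => h x (by simp [hx]))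
      rw [regFlatR]
      have ha : 1 ≤ a := h a (by simp)
      have h1 : 0 ≤ qsR t a := qsR_nonneg ht ht1 (by omega)
      have h2 : (0:ℝ) < t ^ a := zpow_pos ht _
      have h3 : 0 < t ^ a / regFlatR t⁻¹ (d :: rest) := div_pos h2 hy
      linarith

/-! ### Nonvanishing in `K` via evaluation -/

lemma one_sub_tval_ne_zero : (1:ℝ) - tval ≠ 0 := by
  intro h; exact tval_ne_one (by linarith)

lemma one_sub_tvalinv_ne_zero : (1:ℝ) - tval⁻¹ ≠ 0 := by
  intro h
  have h1 : tval⁻¹ = 1 := by linarith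
  exact tval_ne_one (by rw [← inv_inv tval, h1, inv_one])

lemma nflat_gt (L : List ℤ) (hne : L ≠ []) (h : ∀ c ∈ L, 2 ≤ c) :
    1 < ψ (nflat L) := by
  rw [psi_nflat]; exact nflatR_gt_one tval_pos one_sub_tval_ne_zero L hne h

lemma nflat_ne_zero (L : List ℤ) (hne : L ≠ []) (h : ∀ c ∈ L, 2 ≤ c) :
    nflat L ≠ 0 := by
  intro h0
  have h1 := nflat_gt L hne h
  rw [h0, map_zero] at h1; linarith

lemma nflat_sub_one_ne_zero (L : List ℤ) (hne : L ≠ []) (h : ∀ c ∈ L, 2 ≤ c) :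
    nflat L - 1 ≠ 0 := by
  intro h0
  have h1 := nflat_gt L hne h
  have h2 : nflat L = 1 := by linear_combination h0
  rw [h2, map_one] at h1; linarith

lemma regFlatX_q_ne_zero (L : List ℤ) (hne : L ≠ []) (h : ∀ c ∈ L, 1 ≤ c) :
    regFlatX q L ≠ 0 := by
  intro h0
  have hpos := regFlatR_pos tval L tval_pos one_sub_tval_ne_zero hne h
  rw [← psi_q, ← psi_regFlatX, h0, map_zero] at hpos
  exact lt_irrefl _ hpos

lemma regFlatX_qinv_ne_zero (L : List ℤ) (hne : L ≠ []) (h : ∀ c ∈ L, 1 ≤ c) :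
    regFlatX q⁻¹ L ≠ 0 := by
  intro h0
  have hpos := regFlatR_pos tval⁻¹ L (inv_pos.mpr tval_pos) one_sub_tvalinv_ne_zero hne h
  rw [← psi_qinv, ← psi_regFlatX, h0, map_zero] at hpos
  exact lt_irrefl _ hpos

/-! ### Unfolding lemmas -/

lemma negCF_cons (c : ℤ) {M : List ℤ} (h : M ≠ []) :
    negCF (c :: M) = c - 1 / negCF M := by
  cases M with
  | nil => exact absurd rfl h
  | cons d r => rfl

lemma regCF_cons (a : ℤ) {M : List ℤ} (h : M ≠ []) :
    regCF (a :: M) = a + 1 / regCF M := by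
  cases M with
  | nil => exact absurd rfl h
  | cons d r => rfl

lemma nflat_cons (c : ℤ) {M : List ℤ} (h : M ≠ []) :
    nflat (c :: M) = qs c - q ^ (c - 1) / nflat M := by
  cases M with
  | nil => exact absurd rfl h
  | cons d r => rfl

lemma regFlatX_cons (x : K) (a : ℤ) {M : List ℤ} (h : M ≠ []) :
    regFlatX x (a :: M) = qsX x a + x ^ a / regFlatX x⁻¹ M := by
  cases M with
  | nil => exact absurd rfl h
  | cons d r => rfl

/-! ### Algebra of q-integers in `K` -/

lemma qsX_zero' (x : K) : qsX x 0 = 0 := by simp [qsX]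

lemma qsX_one' (x : K) (hx1 : 1 - x ≠ 0) : qsX x 1 = 1 := by
  rw [qsX, zpow_one]; exact div_self hx1

lemma qsX_succ (x : K) (hx0 : x ≠ 0) (hx1 : 1 - x ≠ 0) (n : ℤ) :
    qsX x (n + 1) = x * qsX x n + 1 := by
  rw [qsX, qsX, zpow_succ_mul' x hx0]
  field_simp
  ring

lemma qfX_eq (x : K) (hx0 : x ≠ 0) (hx1 : 1 - x ≠ 0) (n : ℤ) :
    qfX x n = qsX x (n - 1) + x ^ n := by
  rw [qfX, qsX, zpow_succ_mul' x hx0 n, zpow_pred_mul' x hx0 n]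
  field_simp
  ring

lemma qfX_one' (x : K) (hx0 : x ≠ 0) (hx1 : 1 - x ≠ 0) : qfX x 1 = x := by
  rw [qfX_eq x hx0 hx1, show (1:ℤ) - 1 = 0 by norm_num, qsX_zero', zpow_one, zero_add]

lemma qsX_two' (x : K) (hx0 : x ≠ 0) (hx1 : 1 - x ≠ 0) : qsX x 2 = 1 + x := by
  rw [show (2:ℤ) = 1 + 1 by norm_num, qsX_succ x hx0 hx1, qsX_one' x hx1, mul_one, add_comm]

lemma regFlatX_succ_head (x : K) (hx0 : x ≠ 0) (hx1 : 1 - x ≠ 0) (b : ℤ) (M : List ℤ) :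
    regFlatX x ((b + 1) :: M) = x * regFlatX x (b :: M) + 1 := by
  have hb : qsX x b = x * qsX x (b - 1) + 1 := by
    conv_lhs => rw [show b = b - 1 + 1 by ring]
    exact qsX_succ x hx0 hx1 _
  cases M with
  | nil =>
      show qfX x (b + 1) = x * qfX x b + 1
      rw [qfX_eq x hx0 hx1, qfX_eq x hx0 hx1, show b + 1 - 1 = b by ring,
        zpow_succ_mul' x hx0 b, hb]
      ring
  | cons d r =>
      rw [regFlatX_cons x (b + 1) (by simp), regFlatX_cons x b (by simp),
        qsX_succ x hx0 hx1 b, zpow_succ_mul' x hx0 b]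
      ring

/-! ### The correspondence `phi` between regular and negative expansions -/

def phi : ℤ → List ℤ → List ℤ
  | _, [] => []
  | δ, [a] => [a + δ]
  | δ, a :: b :: rest => (a + δ) :: (List.replicate (b - 1).toNat 2 ++ phi 2 rest)

lemma phi_mem (δ : ℤ) (L : List ℤ) : 2 ≤ δ → (∀ x ∈ L, 1 ≤ x) →
    ∀ y ∈ phi δ L, 2 ≤ y := by
  induction δ, L using phi.induct with
  | case1 δ => simp [phi]
  | case2 δ a =>
      intro hδ h y hy
      simp only [phi, List.mem_singleton] at hy
      have := h a (by simp)
      omega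
  | case3 δ a b rest ih =>
      intro hδ h y hy
      simp only [phi, List.mem_cons, List.mem_append] at hy
      rcases hy with hy | hy | hy
      · have := h a (by simp); omega
      · rw [List.eq_of_mem_replicate hy]
      · exact ih le_rfl (fun x hx => h x (by simp [hx])) y hy

/-! ### Classical positivity -/

lemma negCF_gt_one (L : List ℤ) : L ≠ [] → (∀ c ∈ L, 2 ≤ c) → 1 < negCF L := by
  induction L using negCF.induct with
  | case1 => intro h; exact absurd rfl h
  | case2 c =>
      intro _ h
      have hc : (2:ℚ) ≤ (c:ℚ) := by exact_mod_cast h c (by simp)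
      show (1:ℚ) < (c:ℚ)
      linarith
  | case3 c d rest ih =>
      intro _ h
      have hy : 1 < negCF (d :: rest) := ih (by simp) (fun x hx => h x (by simp [hx]))
      have hc : (2:ℚ) ≤ (c:ℚ) := by exact_mod_cast h c (by simp)
      rw [negCF_cons c (by simp)]
      have h2 : 1 / negCF (d :: rest) < 1 := by
        rw [div_lt_one (by linarith)]; linarith
      linarith

lemma regCF_pos (L : List ℤ) : L ≠ [] → (∀ c ∈ L, 1 ≤ c) → 0 < regCF L := by
  induction L using regCF.induct with
  | case1 => intro h; exact absurd rfl h
  | case2 a =>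
      intro _ h
      have hc : (1:ℚ) ≤ (a:ℚ) := by exact_mod_cast h a (by simp)
      show (0:ℚ) < (a:ℚ)
      linarith
  | case3 a d rest ih =>
      intro _ h
      have hy : 0 < regCF (d :: rest) := ih (by simp) (fun x hx => h x (by simp [hx]))
      have hc : (1:ℚ) ≤ (a:ℚ) := by exact_mod_cast h a (by simp)
      rw [regCF_cons a (by simp)]
      have h2 : 0 < 1 / regCF (d :: rest) := by positivity
      linarith

/-! ### Classical correspondence between regular and negative expansions -/

lemma phi_ne_nil (δ : ℤ) {L : List ℤ} (h : L ≠ []) : phi δ L ≠ [] := by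
  cases L with
  | nil => exact absurd rfl h
  | cons a M => cases M <;> simp [phi]

lemma CL_ne_nil {b' : ℤ} (rest : List ℤ) (h : 2 ≤ b' ∨ rest ≠ []) :
    List.replicate (b' - 1).toNat 2 ++ phi 2 rest ≠ [] := by
  intro hc
  rcases List.append_eq_nil_iff.mp hc with ⟨h1, h2⟩
  rcases h with h | h
  · have hh : (b' - 1).toNat ≠ 0 := by omega
    rw [List.replicate_eq_nil_iff] at h1
    exact hh h1
  · exact phi_ne_nil 2 h h2

lemma regCF_succ_head (b : ℤ) (M : List ℤ) :
    regCF ((b + 1) :: M) = regCF (b :: M) + 1 := by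
  cases M with
  | nil => show ((b + 1 : ℤ) : ℚ) = (b : ℚ) + 1; push_cast; ring
  | cons d r =>
      show ((b + 1 : ℤ) : ℚ) + 1 / regCF (d :: r) = ((b:ℤ):ℚ) + 1 / regCF (d :: r) + 1
      push_cast; ring

lemma negCF_phi : ∀ (n : ℕ) (a b : ℤ) (rest : List ℤ),
    (a :: b :: rest).length ≤ n → Even rest.length → (∀ x ∈ b :: rest, 1 ≤ x) →
    ∀ δ : ℤ, negCF (phi δ (a :: b :: rest)) = regCF (a :: b :: rest) + (δ - 1) := by
  intro n
  induction n with
  | zero => intro a b rest hlen; simp at hlen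
  | succ n ih =>
    intro a b rest hlen heven htail δ
    have hb : 1 ≤ b := htail b (by simp)
    have hrest : ∀ x ∈ rest, 1 ≤ x := fun x hx => htail x (by simp [hx])
    by_cases hdeg : b = 1 ∧ rest = []
    · obtain ⟨hb1, hr⟩ := hdeg
      subst hb1; subst hr
      have hphi : phi δ [a, 1] = [a + δ] := by
        show (a + δ) :: (List.replicate ((1:ℤ) - 1).toNat 2 ++ phi 2 []) = [a + δ]
        norm_num [phi]
      rw [hphi]
      show ((a + δ : ℤ) : ℚ) = regCF [a, 1] + ((δ:ℚ) - 1)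
      rw [regCF_cons a (by simp)]
      show ((a + δ : ℤ) : ℚ) = (a : ℚ) + 1 / ((1:ℤ):ℚ) + ((δ:ℚ) - 1)
      push_cast; ring
    · -- main case
      have hCLmem : ∀ b' : ℤ, ∀ y ∈ List.replicate (b' - 1).toNat 2 ++ phi 2 rest, 2 ≤ y := by
        intro b' y hy
        rcases List.mem_append.mp hy with hy | hy
        · rw [List.eq_of_mem_replicate hy]
        · exact phi_mem 2 rest le_rfl hrest y hy
      have hstep : ∀ b' : ℤ, 1 ≤ b' →
          List.replicate (b' - 1).toNat 2 ++ phi 2 rest ≠ [] →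
          regCF (b' :: rest) =
            negCF (List.replicate (b' - 1).toNat 2 ++ phi 2 rest) /
              (negCF (List.replicate (b' - 1).toNat 2 ++ phi 2 rest) - 1) →
          regCF ((b' + 1) :: rest) =
            negCF (List.replicate (b' + 1 - 1).toNat 2 ++ phi 2 rest) /
              (negCF (List.replicate (b' + 1 - 1).toNat 2 ++ phi 2 rest) - 1) := by
        intro b' hb' hne hprev
        have hN1 : 1 < negCF (List.replicate (b' - 1).toNat 2 ++ phi 2 rest) :=
          negCF_gt_one _ hne (hCLmem b')
        set N := negCF (List.replicate (b' - 1).toNat 2 ++ phi 2 rest) with hNdef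
        have hCL1 : List.replicate (b' + 1 - 1).toNat 2 ++ phi 2 rest =
            2 :: (List.replicate (b' - 1).toNat 2 ++ phi 2 rest) := by
          have h2 : (b' + 1 - 1).toNat = (b' - 1).toNat + 1 := by omega
          rw [h2, List.replicate_succ, List.cons_append]
        rw [hCL1, negCF_cons 2 hne, regCF_succ_head, hprev, ← hNdef]
        have hN0 : N ≠ 0 := by intro h; rw [h] at hN1; norm_num at hN1
        have hN1' : N - 1 ≠ 0 := sub_ne_zero.mpr (ne_of_gt hN1)
        have hD : ((2:ℤ) - 1/N : ℚ) - 1 ≠ 0 := by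
          push_cast
          have h2 : 1 / N < 1 := by rw [div_lt_one (by linarith)]; linarith
          intro h; linarith
        push_cast at hD ⊢
        rw [div_add' _ _ _ hN1', eq_div_iff hD, div_mul_eq_mul_div, div_eq_iff hN1']
        field_simp
        ring
      have hkey : ∀ b' : ℤ, 1 ≤ b' → (rest = [] → 2 ≤ b') →
          regCF (b' :: rest) =
            negCF (List.replicate (b' - 1).toNat 2 ++ phi 2 rest) /
              (negCF (List.replicate (b' - 1).toNat 2 ++ phi 2 rest) - 1) := by
        intro b' hb' hcond
        rcases eq_or_ne rest [] with hre | hre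
        · subst hre
          have h2b : 2 ≤ b' := hcond rfl
          refine Int.le_induction
            (motive := fun k _ => regCF [k] =
              negCF (List.replicate (k - 1).toNat 2 ++ phi 2 []) /
                (negCF (List.replicate (k - 1).toNat 2 ++ phi 2 []) - 1)) ?_ ?_ b' h2b
          · beta_reduce
            have h1 : ((2:ℤ) - 1).toNat = 1 := by norm_num
            rw [h1]
            show ((2:ℤ):ℚ) = negCF ([2] ++ phi 2 []) / (negCF ([2] ++ phi 2 []) - 1)
            show ((2:ℤ):ℚ) = ((2:ℤ):ℚ) / (((2:ℤ):ℚ) - 1)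
            norm_num
          · intro k hk ihk
            exact hstep k (by omega) (CL_ne_nil [] (Or.inl hk)) ihk
        · refine Int.le_induction
            (motive := fun k _ => regCF (k :: rest) =
              negCF (List.replicate (k - 1).toNat 2 ++ phi 2 rest) /
                (negCF (List.replicate (k - 1).toNat 2 ++ phi 2 rest) - 1)) ?_ ?_ b' hb'
          · beta_reduce
            have h1 : ((1:ℤ) - 1).toNat = 0 := by norm_num
            rw [h1, List.replicate_zero, List.nil_append]
            obtain ⟨a', rest2, hr2⟩ : ∃ a' rest2, rest = a' :: rest2 := by
              cases rest with
              | nil => exact absurd rfl hre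
              | cons x xs => exact ⟨x, xs, rfl⟩
            obtain ⟨b'', rest3, hr3⟩ : ∃ b'' rest3, rest2 = b'' :: rest3 := by
              cases rest2 with
              | nil =>
                  exfalso; rw [hr2] at heven; simp [Nat.even_iff] at heven
              | cons x xs => exact ⟨x, xs, rfl⟩
            have hlen' : (a' :: b'' :: rest3).length ≤ n := by
              rw [hr2, hr3] at hlen; simp at hlen ⊢; omega
            have heven' : Even rest3.length := by
              rw [hr2, hr3] at heven; simp [Nat.even_iff] at heven ⊢; omega
            have htail' : ∀ x ∈ b'' :: rest3, 1 ≤ x := by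
              intro x hx
              apply hrest; rw [hr2, hr3]
              simp at hx ⊢; tauto
            have hNval : negCF (phi 2 rest) = regCF rest + 1 := by
              rw [hr2, hr3]
              have := ih a' b'' rest3 hlen' heven' htail' 2
              rw [this]; norm_num
            have hR : 0 < regCF rest := regCF_pos rest hre hrest
            rw [hNval, regCF_cons 1 hre]
            have hR0 : regCF rest ≠ 0 := ne_of_gt hR
            push_cast
            rw [eq_div_iff (by intro h; apply hR0; linarith)]
            field_simp
            ring
          · intro k hk ihk
            exact hstep k (by omega) (CL_ne_nil rest (Or.inr hre)) ihk
      -- assemble the main case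
      have hbne : 2 ≤ b ∨ rest ≠ [] := by
        rcases eq_or_ne rest [] with h | h
        · left; rcases eq_or_ne b 1 with hb1 | hb1
          · exact absurd ⟨hb1, h⟩ hdeg
          · omega
        · right; exact h
      have hCLne := CL_ne_nil rest hbne
      have hcond : rest = [] → 2 ≤ b := by
        intro h; rcases hbne with h2 | h2
        · exact h2
        · exact absurd h h2
      have hk := hkey b hb hcond
      have hN1 : 1 < negCF (List.replicate (b - 1).toNat 2 ++ phi 2 rest) :=
        negCF_gt_one _ hCLne (hCLmem b)
      set N := negCF (List.replicate (b - 1).toNat 2 ++ phi 2 rest) with hNdef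
      have hphi : phi δ (a :: b :: rest) =
          (a + δ) :: (List.replicate (b - 1).toNat 2 ++ phi 2 rest) := rfl
      rw [hphi, negCF_cons _ hCLne, regCF_cons a (by simp), hk, ← hNdef]
      have hN0 : N ≠ 0 := by intro h; rw [h] at hN1; norm_num at hN1
      have hN1' : N - 1 ≠ 0 := sub_ne_zero.mpr (ne_of_gt hN1)
      push_cast
      field_simp
      ring

/-! ### Injectivity of the negative continued fraction expansion -/

lemma negCF_inj (L1 : List ℤ) : ∀ L2 : List ℤ, L1 ≠ [] → L2 ≠ [] →
    (∀ x ∈ L1.tail, 2 ≤ x) → (∀ x ∈ L2.tail, 2 ≤ x) →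
    negCF L1 = negCF L2 → L1 = L2 := by
  induction L1 with
  | nil => intro L2 h; exact absurd rfl h
  | cons c M1 ih =>
    intro L2 _ hL2 h1 h2 heq
    cases L2 with
    | nil => exact absurd rfl hL2
    | cons c' M2 =>
      simp only [List.tail_cons] at h1 h2
      cases M1 with
      | nil =>
        cases M2 with
        | nil =>
          have : (c : ℚ) = (c' : ℚ) := heq
          have : c = c' := by exact_mod_cast this
          rw [this]
        | cons d2 r2 =>
          exfalso
          have hy : 1 < negCF (d2 :: r2) := negCF_gt_one _ (by simp) h2
          have heq' : (c : ℚ) = (c' : ℚ) - 1 / negCF (d2 :: r2) := by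
            rw [← negCF_cons c' (by simp)]; exact heq
          have hlt : 0 < 1 / negCF (d2 :: r2) := by positivity
          have hlt2 : 1 / negCF (d2 :: r2) < 1 := by
            rw [div_lt_one (by linarith)]; linarith
          have e1 : (c : ℚ) < (c' : ℚ) := by linarith
          have e2 : (c' : ℚ) - 1 < (c : ℚ) := by linarith
          have e1' : c < c' := by exact_mod_cast e1
          have e2' : c' - 1 < c := by exact_mod_cast e2
          omega
      | cons d1 r1 =>
        cases M2 with
        | nil =>
          exfalso
          have hy : 1 < negCF (d1 :: r1) := negCF_gt_one _ (by simp) h1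
          have heq' : (c : ℚ) - 1 / negCF (d1 :: r1) = (c' : ℚ) := by
            rw [← negCF_cons c (by simp)]; exact heq
          have hlt : 0 < 1 / negCF (d1 :: r1) := by positivity
          have hlt2 : 1 / negCF (d1 :: r1) < 1 := by
            rw [div_lt_one (by linarith)]; linarith
          have e1 : (c' : ℚ) < (c : ℚ) := by linarith
          have e2 : (c : ℚ) - 1 < (c' : ℚ) := by linarith
          have e1' : c' < c := by exact_mod_cast e1
          have e2' : c - 1 < c' := by exact_mod_cast e2
          omega
        | cons d2 r2 =>
          have hy1 : 1 < negCF (d1 :: r1) := negCF_gt_one _ (by simp) h1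
          have hy2 : 1 < negCF (d2 :: r2) := negCF_gt_one _ (by simp) h2
          have heq' : (c : ℚ) - 1 / negCF (d1 :: r1) = (c' : ℚ) - 1 / negCF (d2 :: r2) := by
            rw [← negCF_cons c (by simp), ← negCF_cons c' (by simp)]; exact heq
          have hl1 : 0 < 1 / negCF (d1 :: r1) := by positivity
          have hl2 : 0 < 1 / negCF (d2 :: r2) := by positivity
          have hu1 : 1 / negCF (d1 :: r1) < 1 := by
            rw [div_lt_one (by linarith)]; linarith
          have hu2 : 1 / negCF (d2 :: r2) < 1 := by
            rw [div_lt_one (by linarith)]; linarith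
          have e1 : (c : ℚ) < (c' : ℚ) + 1 := by linarith
          have e2 : (c' : ℚ) < (c : ℚ) + 1 := by linarith
          have e1' : c < c' + 1 := by exact_mod_cast e1
          have e2' : c' < c + 1 := by exact_mod_cast e2
          have hcc : c = c' := by omega
          subst hcc
          have hyeq : negCF (d1 :: r1) = negCF (d2 :: r2) := by
            have hne1 : negCF (d1 :: r1) ≠ 0 := by linarith
            have hne2 : negCF (d2 :: r2) ≠ 0 := by linarith
            have : 1 / negCF (d1 :: r1) = 1 / negCF (d2 :: r2) := by linarith
            field_simp at this
            linarith
          have htl : (d1 :: r1) = (d2 :: r2) := by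
            apply ih (d2 :: r2) (by simp) (by simp)
            · intro x hx; exact h1 x (by simp at hx ⊢; tauto)
            · intro x hx; exact h2 x (by simp at hx ⊢; tauto)
            · exact hyeq
          rw [htl]

/-! ### The q-deformed correspondence -/

lemma nflat_phi : ∀ (n : ℕ) (a b : ℤ) (rest : List ℤ),
    (a :: b :: rest).length ≤ n → Even rest.length → (∀ x ∈ b :: rest, 1 ≤ x) →
    ∀ δ : ℤ, nflat (phi δ (a :: b :: rest)) =
      qsX q (δ - 1) + q ^ (δ - 1) * regFlat (a :: b :: rest) := by
  have hq0 : q ≠ 0 := q_ne_zero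
  have hq1 : (1:K) - q ≠ 0 := one_sub_q_ne_zero
  have hqi0 : q⁻¹ ≠ 0 := inv_ne_zero hq0
  have hqi1 : (1:K) - q⁻¹ ≠ 0 := one_sub_qinv_ne_zero
  intro n
  induction n with
  | zero => intro a b rest hlen; simp at hlen
  | succ n ih =>
    intro a b rest hlen heven htail δ
    have hb : 1 ≤ b := htail b (by simp)
    have hrest : ∀ x ∈ rest, 1 ≤ x := fun x hx => htail x (by simp [hx])
    by_cases hdeg : b = 1 ∧ rest = []
    · obtain ⟨hb1, hr⟩ := hdeg
      subst hb1; subst hr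
      have hphi : phi δ [a, 1] = [a + δ] := by
        show (a + δ) :: (List.replicate ((1:ℤ) - 1).toNat 2 ++ phi 2 []) = [a + δ]
        norm_num [phi]
      have hreg : regFlat [a, 1] = qsX q a + q ^ a * q := by
        show qsX q a + q ^ a / regFlatX q⁻¹ [1] = _
        show qsX q a + q ^ a / qfX q⁻¹ 1 = _
        rw [qfX_one' q⁻¹ hqi0 hqi1, div_eq_mul_inv, inv_inv]
      rw [hphi, hreg]
      show qfX q (a + δ) = _
      rw [qfX_eq q hq0 hq1]
      simp only [qsX]
      rw [show a + δ = δ - 1 + a + 1 by ring, show δ - 1 + a + 1 - 1 = δ - 1 + a by ring,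
        zpow_add₀ hq0 (δ - 1 + a) 1, zpow_add₀ hq0 (δ - 1) a, zpow_one]
      field_simp
      ring
    · -- main case
      have hCLmem : ∀ b' : ℤ, ∀ y ∈ List.replicate (b' - 1).toNat 2 ++ phi 2 rest, 2 ≤ y := by
        intro b' y hy
        rcases List.mem_append.mp hy with hy | hy
        · rw [List.eq_of_mem_replicate hy]
        · exact phi_mem 2 rest le_rfl hrest y hy
      have hstep : ∀ b' : ℤ, 1 ≤ b' →
          List.replicate (b' - 1).toNat 2 ++ phi 2 rest ≠ [] →
          regFlatX q⁻¹ (b' :: rest) =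
            nflat (List.replicate (b' - 1).toNat 2 ++ phi 2 rest) /
              (nflat (List.replicate (b' - 1).toNat 2 ++ phi 2 rest) - 1) →
          regFlatX q⁻¹ ((b' + 1) :: rest) =
            nflat (List.replicate (b' + 1 - 1).toNat 2 ++ phi 2 rest) /
              (nflat (List.replicate (b' + 1 - 1).toNat 2 ++ phi 2 rest) - 1) := by
        intro b' hb' hne hprev
        have hN0 : nflat (List.replicate (b' - 1).toNat 2 ++ phi 2 rest) ≠ 0 :=
          nflat_ne_zero _ hne (hCLmem b')
        have hN1' : nflat (List.replicate (b' - 1).toNat 2 ++ phi 2 rest) - 1 ≠ 0 :=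
          nflat_sub_one_ne_zero _ hne (hCLmem b')
        set N := nflat (List.replicate (b' - 1).toNat 2 ++ phi 2 rest) with hNdef
        have hCL1 : List.replicate (b' + 1 - 1).toNat 2 ++ phi 2 rest =
            2 :: (List.replicate (b' - 1).toNat 2 ++ phi 2 rest) := by
          have h2 : (b' + 1 - 1).toNat = (b' - 1).toNat + 1 := by omega
          rw [h2, List.replicate_succ, List.cons_append]
        rw [hCL1, nflat_cons 2 hne, ← hNdef, regFlatX_succ_head q⁻¹ hqi0 hqi1, hprev]
        have e2 : qs 2 = 1 + q := by
          show qsX q 2 = 1 + q; exact qsX_two' q hq0 hq1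
        rw [e2, show ((2:ℤ) - 1) = 1 by norm_num, zpow_one]
        have hBe : (1:K) + q - q / N - 1 = q * (N - 1) / N := by
          field_simp
          ring
        have hDne : (1:K) + q - q / N - 1 ≠ 0 := by
          rw [hBe]; exact div_ne_zero (mul_ne_zero hq0 hN1') hN0
        rw [eq_div_iff hDne]
        field_simp
        ring
      have hkey : ∀ b' : ℤ, 1 ≤ b' → (rest = [] → 2 ≤ b') →
          regFlatX q⁻¹ (b' :: rest) =
            nflat (List.replicate (b' - 1).toNat 2 ++ phi 2 rest) /
              (nflat (List.replicate (b' - 1).toNat 2 ++ phi 2 rest) - 1) := by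
        intro b' hb' hcond
        rcases eq_or_ne rest [] with hre | hre
        · subst hre
          have h2b : 2 ≤ b' := hcond rfl
          refine Int.le_induction
            (motive := fun k _ => regFlatX q⁻¹ [k] =
              nflat (List.replicate (k - 1).toNat 2 ++ phi 2 []) /
                (nflat (List.replicate (k - 1).toNat 2 ++ phi 2 []) - 1)) ?_ ?_ b' h2b
          · beta_reduce
            have h1 : ((2:ℤ) - 1).toNat = 1 := by norm_num
            rw [h1]
            show qfX q⁻¹ 2 = nflat [2] / (nflat [2] - 1)
            show qfX q⁻¹ 2 = qfX q 2 / (qfX q 2 - 1)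
            have e1 : qfX q⁻¹ 2 = 1 + (q⁻¹) ^ (2:ℤ) := by
              rw [qfX_eq q⁻¹ hqi0 hqi1, show (2:ℤ) - 1 = 1 by norm_num, qsX_one' q⁻¹ hqi1]
            have e2 : qfX q 2 = 1 + q ^ (2:ℤ) := by
              rw [qfX_eq q hq0 hq1, show (2:ℤ) - 1 = 1 by norm_num, qsX_one' q hq1]
            rw [e1, e2, inv_zpow]
            have h2 : (q:K) ^ (2:ℤ) ≠ 0 := zpow_ne_zero _ hq0
            field_simp
            ring
          · intro k hk ihk
            exact hstep k (by omega) (CL_ne_nil [] (Or.inl hk)) ihk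
        · refine Int.le_induction
            (motive := fun k _ => regFlatX q⁻¹ (k :: rest) =
              nflat (List.replicate (k - 1).toNat 2 ++ phi 2 rest) /
                (nflat (List.replicate (k - 1).toNat 2 ++ phi 2 rest) - 1)) ?_ ?_ b' hb'
          · beta_reduce
            have h1 : ((1:ℤ) - 1).toNat = 0 := by norm_num
            rw [h1, List.replicate_zero, List.nil_append]
            obtain ⟨a', rest2, hr2⟩ : ∃ a' rest2, rest = a' :: rest2 := by
              cases rest with
              | nil => exact absurd rfl hre
              | cons x xs => exact ⟨x, xs, rfl⟩
            obtain ⟨b'', rest3, hr3⟩ : ∃ b'' rest3, rest2 = b'' :: rest3 := by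
              cases rest2 with
              | nil => exfalso; rw [hr2] at heven; simp [Nat.even_iff] at heven
              | cons x xs => exact ⟨x, xs, rfl⟩
            have hlen' : (a' :: b'' :: rest3).length ≤ n := by
              rw [hr2, hr3] at hlen; simp at hlen ⊢; omega
            have heven' : Even rest3.length := by
              rw [hr2, hr3] at heven; simp [Nat.even_iff] at heven ⊢; omega
            have htail' : ∀ x ∈ b'' :: rest3, 1 ≤ x := by
              intro x hx
              apply hrest; rw [hr2, hr3]
              simp at hx ⊢; tauto
            have hNval : nflat (phi 2 rest) = 1 + q * regFlatX q rest := by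
              rw [hr2, hr3]
              have h5 := ih a' b'' rest3 hlen' heven' htail' 2
              rw [h5, show (2:ℤ) - 1 = 1 by norm_num, qsX_one' q hq1, zpow_one]
              rfl
            have hR0 : regFlatX q rest ≠ 0 := regFlatX_q_ne_zero rest hre hrest
            rw [hNval, regFlatX_cons q⁻¹ 1 hre, inv_inv, qsX_one' q⁻¹ hqi1, zpow_one]
            have hDne : (1:K) + q * regFlatX q rest - 1 ≠ 0 := by
              intro h
              exact (mul_ne_zero hq0 hR0) (by linear_combination h)
            rw [eq_div_iff hDne]
            field_simp
            ring
          · intro k hk ihk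
            exact hstep k (by omega) (CL_ne_nil rest (Or.inr hre)) ihk
      -- assemble the main case
      have hbne : 2 ≤ b ∨ rest ≠ [] := by
        rcases eq_or_ne rest [] with h | h
        · left
          rcases eq_or_ne b 1 with hb1 | hb1
          · exact absurd ⟨hb1, h⟩ hdeg
          · omega
        · right; exact h
      have hCLne := CL_ne_nil rest hbne
      have hcond : rest = [] → 2 ≤ b := by
        intro h; rcases hbne with h2 | h2
        · exact h2
        · exact absurd h h2
      have hk := hkey b hb hcond
      have hN0 : nflat (List.replicate (b - 1).toNat 2 ++ phi 2 rest) ≠ 0 :=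
        nflat_ne_zero _ hCLne (hCLmem b)
      have hN1' : nflat (List.replicate (b - 1).toNat 2 ++ phi 2 rest) - 1 ≠ 0 :=
        nflat_sub_one_ne_zero _ hCLne (hCLmem b)
      set N := nflat (List.replicate (b - 1).toNat 2 ++ phi 2 rest) with hNdef
      have hphi : phi δ (a :: b :: rest) =
          (a + δ) :: (List.replicate (b - 1).toNat 2 ++ phi 2 rest) := rfl
      have hreg2 : regFlat (a :: b :: rest) = qsX q a + q ^ a / regFlatX q⁻¹ (b :: rest) := by
        show regFlatX q (a :: b :: rest) = _
        rw [regFlatX_cons q a (by simp)]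
      rw [hphi, nflat_cons _ hCLne, ← hNdef, hreg2, hk]
      simp only [qs, qsX]
      rw [show a + δ = δ - 1 + a + 1 by ring, show δ - 1 + a + 1 - 1 = δ - 1 + a by ring,
        zpow_add₀ hq0 (δ - 1 + a) 1, zpow_add₀ hq0 (δ - 1) a, zpow_one]
      field_simp
      ring

/-- the left q-deformed regular and negative continued fraction
expansions of the same rational number coincide. -/
theorem left_regular_eq_left_negative
    (m : ℕ) (hm : 1 ≤ m) (a1 : ℤ) (as : List ℤ)
    (hlen : (a1 :: as).length = 2 * m)
    (ha1 : 0 ≤ a1) (has : ∀ x ∈ as, 1 ≤ x)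
    (c1 : ℤ) (cs : List ℤ) (hc1 : 1 ≤ c1) (hcs : ∀ x ∈ cs, 2 ≤ x)
    (hval : regCF (a1 :: as) = negCF (c1 :: cs)) :
    regFlat (a1 :: as) = nflat (c1 :: cs) := by
  obtain ⟨b, rest, hbr⟩ : ∃ b rest, as = b :: rest := by
    cases as with
    | nil => exfalso; simp at hlen; omega
    | cons x xs => exact ⟨x, xs, rfl⟩
  subst hbr
  have heven : Even rest.length := by
    simp at hlen
    rw [Nat.even_iff]; omega
  have htail : ∀ x ∈ b :: rest, 1 ≤ x := has
  have hrest : ∀ x ∈ rest, 1 ≤ x := fun x hx => has x (by simp [hx])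
  have hclass := negCF_phi (a1 :: b :: rest).length a1 b rest le_rfl heven htail 1
  have hclass' : negCF (phi 1 (a1 :: b :: rest)) = negCF (c1 :: cs) := by
    rw [hclass, hval]; push_cast; ring
  have hCLmem : ∀ y ∈ List.replicate (b - 1).toNat 2 ++ phi 2 rest, 2 ≤ y := by
    intro y hy
    rcases List.mem_append.mp hy with hy | hy
    · rw [List.eq_of_mem_replicate hy]
    · exact phi_mem 2 rest le_rfl hrest y hy
  have hphi1 : phi 1 (a1 :: b :: rest) =
      (a1 + 1) :: (List.replicate (b - 1).toNat 2 ++ phi 2 rest) := rfl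
  have hinj := negCF_inj (phi 1 (a1 :: b :: rest)) (c1 :: cs)
    (by rw [hphi1]; simp) (by simp)
    (by rw [hphi1]; simpa using hCLmem)
    (by simpa using hcs) hclass'
  have hq := nflat_phi (a1 :: b :: rest).length a1 b rest le_rfl heven htail 1
  rw [show (1:ℤ) - 1 = 0 by norm_num, qsX_zero', zpow_zero, one_mul, zero_add] at hq
  rw [← hinj]
  exact hq.symm
end
end

section
/- For any integers c_1, …, c_l with l ≥ 1, one has E^♭_l(c_1,…,c_{l−1}, c_l − 1)_q = E^♯_l(c_1,…,c_l)_q − q^{c_l − 2}·E^♯_{l−1}(c_1,…,c_{l−1})_q. -/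
noncomputable section

lemma qfX_sub_one {x : K} (hx₀ : x ≠ 0) (hx₁ : x ≠ 1) (n : ℤ) :
    qfX x (n - 1) = qsX x n - x ^ (n - 2) := by
  have h : (1 : K) - x ≠ 0 := sub_ne_zero.mpr hx₁.symm
  have hpow : x ^ (n - 1) = x ^ (n - 2) * x := by
    rw [← zpow_add_one₀ hx₀]; congr 1; ring
  rw [qfX, qsX, div_sub' h, sub_sub, sub_add_cancel, hpow, show (1 : ℤ) + 1 = 2 from rfl]
  ring

/-- The continuant is affine in its last diagonal entry, with slope the continuant of the other
entries, and `[n - 1]^♭ = [n]^♯ - x^(n-2)` by `qfX_sub_one`. -/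
theorem EflatX_append_sub_one {x : K} (hx₀ : x ≠ 0) (hx₁ : x ≠ 1) :
    ∀ (cs : List ℤ) (n : ℤ),
      EflatX x (cs ++ [n - 1]) = EsharpX x (cs ++ [n]) - x ^ (n - 2) * EsharpX x cs
  | [], n => by simp [EflatX, EsharpX, qfX_sub_one hx₀ hx₁]
  | [c], n => by
    simp only [List.cons_append, List.nil_append, EflatX, EsharpX, qfX_sub_one hx₀ hx₁]
    ring
  | c :: d :: rest, n => by
    have h₁ := EflatX_append_sub_one hx₀ hx₁ (d :: rest) n
    have h₂ := EflatX_append_sub_one hx₀ hx₁ rest n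
    simp only [List.cons_append] at h₁ ⊢
    rw [EflatX, EsharpX, EsharpX, h₁, h₂]
    ring

/-- E^♭_l(c_1,…,c_{l−1},c_l−1) = E^♯_l(c_1,…,c_l) − q^{c_l−2}·E^♯_{l−1}(c_1,…,c_{l−1}). -/
theorem Eflat_last_minus_one (cs : List ℤ) (cl : ℤ) :
    Eflat (cs ++ [cl - 1]) = Esharp (cs ++ [cl]) - q ^ (cl - 2) * Esharp cs :=
  EflatX_append_sub_one q_ne_zero q_ne_one cs cl
end
end

section
/- Under the Farey configuration (integers k ≥ 1, 1 ≤ l ≤ k, c_1 ≥ 1, c_2,…,c_l ≥ 2, c_l > 2, and c_{l+1} = ⋯ = c_k = 2), the normalized Jones polynomials satisfy the Farey recursion J(c_1,…,c_k) = J(c_1,…,c_{l−1}, c_l − 1) + q^{c_k − 1}·J(c_1,…,c_{k−1}); that is, if the rational number α = [[c_1,…,c_k]] is the Farey sum of β = [[c_1,…,c_l − 1]] and γ = [[c_1,…,c_{k−1}]], then J_α(q) = J_β(q) + q^{c_k−1}·J_γ(q). -/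
noncomputable section

/-- Normalized Jones polynomial J(c_1,…,c_k) = q·E^♯_k(c_1,…,c_k) + (1−q)·E^♯_{k−1}(c_2,…,c_k). -/
def Jpoly (L : List ℤ) : K := q * Esharp L + (1 - q) * EsharpD L

/-! Expanding the continuant along its last row gives the three-term recursion
`J(M, b, a) = [a]_q J(M, b) - q^{b-1} J(M)` and the relation `J(M, c) = J(M, c - 1) + q^{c-1} J(M)`,
which is the claim when no `2`s are appended. Since `[2]_q = 1 + q`, the recursion with
`a = b = 2` shows that `J(M, c, 2^{n+1}) - q J(M, c, 2^n)` is independent of `n`, and for `n = 0`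
the two relations identify it with `J(M, c - 1)`. -/

section Continuant

variable (x : K)

lemma EsharpX_append_pair (b a : ℤ) : ∀ M : List ℤ,
    EsharpX x (M ++ [b, a]) = qsX x a * EsharpX x (M ++ [b]) - x ^ (b - 1) * EsharpX x M
  | [] => by simp only [List.nil_append, EsharpX]; ring
  | [m] => by simp only [List.cons_append, List.nil_append, EsharpX]; ring
  | m :: m' :: M => by
    have h₁ := EsharpX_append_pair b a (m' :: M)
    have h₂ := EsharpX_append_pair b a M
    simp only [List.cons_append, EsharpX] at *
    linear_combination qsX x m * h₁ - x ^ (m - 1) * h₂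

variable {x}

lemma qsX_eq_qsX_sub_one_add (hx₀ : x ≠ 0) (hx₁ : x ≠ 1) (c : ℤ) :
    qsX x c = qsX x (c - 1) + x ^ (c - 1) := by
  have hsub : 1 - x ≠ 0 := sub_ne_zero.mpr hx₁.symm
  have hpow : x ^ c = x ^ (c - 1) * x := by rw [← zpow_add_one₀ hx₀, sub_add_cancel]
  rw [qsX, qsX, hpow]
  field_simp
  ring

lemma EsharpX_append_singleton (hx₀ : x ≠ 0) (hx₁ : x ≠ 1) (c : ℤ) : ∀ M : List ℤ,
    EsharpX x (M ++ [c]) = EsharpX x (M ++ [c - 1]) + x ^ (c - 1) * EsharpX x M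
  | [] => by
    simpa only [List.nil_append, EsharpX, mul_one] using qsX_eq_qsX_sub_one_add hx₀ hx₁ c
  | [m] => by
    simp only [List.cons_append, List.nil_append, EsharpX]
    linear_combination qsX x m * qsX_eq_qsX_sub_one_add hx₀ hx₁ c
  | m :: m' :: M => by
    have h₁ := EsharpX_append_singleton hx₀ hx₁ c (m' :: M)
    have h₂ := EsharpX_append_singleton hx₀ hx₁ c M
    simp only [List.cons_append, EsharpX] at *
    linear_combination qsX x m * h₁ - x ^ (m - 1) * h₂

end Continuant

lemma qs_two : qs 2 = 1 + q := by
  have hsub : 1 - q ≠ 0 := sub_ne_zero.mpr q_ne_one.symm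
  rw [qs, qsX]
  field_simp
  ring

lemma Jpoly_append_pair (M : List ℤ) (b a : ℤ) :
    Jpoly (M ++ [b, a]) = qs a * Jpoly (M ++ [b]) - q ^ (b - 1) * Jpoly M := by
  cases M with
  | nil => simp only [List.nil_append, Jpoly, EsharpD, Esharp, EsharpX, qs]; ring
  | cons m M =>
    have h₁ := EsharpX_append_pair q b a (m :: M)
    have h₂ := EsharpX_append_pair q b a M
    simp only [List.cons_append, Jpoly, EsharpD, Esharp, qs] at *
    linear_combination q * h₁ + (1 - q) * h₂

lemma Jpoly_append_singleton (M : List ℤ) (c : ℤ) :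
    Jpoly (M ++ [c]) = Jpoly (M ++ [c - 1]) + q ^ (c - 1) * Jpoly M := by
  have hsucc := EsharpX_append_singleton q_ne_zero q_ne_one c
  cases M with
  | nil =>
    simp only [List.nil_append, Jpoly, EsharpD, Esharp, EsharpX]
    linear_combination q * qsX_eq_qsX_sub_one_add q_ne_zero q_ne_one c
  | cons m M =>
    have h₁ := hsucc (m :: M)
    have h₂ := hsucc M
    simp only [List.cons_append, Jpoly, EsharpD, Esharp] at *
    linear_combination q * h₁ + (1 - q) * h₂

lemma Jpoly_append_replicate_two_sub (M : List ℤ) : ∀ n : ℕ,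
    Jpoly (M ++ List.replicate (n + 1) 2) - q * Jpoly (M ++ List.replicate n 2)
      = Jpoly (M ++ [2]) - q * Jpoly M
  | 0 => by simp
  | n + 1 => by
    have hpair := Jpoly_append_pair (M ++ List.replicate n 2) 2 2
    rw [qs_two, show (2 : ℤ) - 1 = 1 by norm_num, zpow_one] at hpair
    have ih := Jpoly_append_replicate_two_sub M n
    simp only [List.replicate_succ', List.append_assoc, List.singleton_append] at hpair ih ⊢
    linear_combination hpair + ih

lemma Jpoly_append_replicate_two_succ (B : List ℤ) (c : ℤ) (n : ℕ) :
    Jpoly (B ++ [c] ++ List.replicate (n + 1) 2)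
      = Jpoly (B ++ [c - 1]) + q * Jpoly (B ++ [c] ++ List.replicate n 2) := by
  have hpair := Jpoly_append_pair B c 2
  rw [qs_two, ← List.singleton_append, ← List.append_assoc] at hpair
  linear_combination Jpoly_append_replicate_two_sub (B ++ [c]) n + hpair +
    Jpoly_append_singleton B c

theorem Jones_farey_general (L : List ℤ) (hL : L ≠ []) (n : ℕ) :
    Jpoly (L ++ List.replicate n 2)
      = Jpoly (L.dropLast ++ [L.getLast! - 1])
        + q ^ ((L ++ List.replicate n 2).getLast! - 1)
          * Jpoly ((L ++ List.replicate n 2).dropLast) := by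
  obtain ⟨B, c, rfl⟩ := L.eq_nil_or_concat.resolve_left hL
  cases n with
  | zero => simpa using Jpoly_append_singleton B c
  | succ m =>
    have hrec := Jpoly_append_replicate_two_succ B c m
    simpa only [List.replicate_succ', List.concat_eq_append, ← List.append_assoc,
      List.dropLast_concat, List.getLast!_eq_getLast?_getD, List.getLast?_concat,
      Option.getD_some, Int.reduceSub, zpow_one] using hrec

/-- Farey recursion for normalized Jones polynomials.  Here
`L = (c_1,…,c_l)` with c_1 ≥ 1, c_2,…,c_l ≥ 2, c_l > 2, and the full sequence is
`L ++ (2,…,2)` with `n = k - l` copies of 2. -/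
theorem Jones_farey (L : List ℤ) (hL : L ≠ [])
    (h1 : 1 ≤ L.head!) (h2 : ∀ x ∈ L.tail, 2 ≤ x) (h3 : 2 < L.getLast!) (n : ℕ) :
    Jpoly (L ++ List.replicate n 2)
      = Jpoly (L.dropLast ++ [L.getLast! - 1])
        + q ^ ((L ++ List.replicate n 2).getLast! - 1)
          * Jpoly ((L ++ List.replicate n 2).dropLast) :=
  Jones_farey_general L hL n
end
end

section
/- Let c_1 ≥ 2 and c_2, …, c_k ≥ 2 be integers (so that the rational number [[c_1,…,c_k]] is greater than 1), and set m = c_1 + ⋯ + c_k − k + 1. Then the normalized Jones polynomial satisfies J(c_1,…,c_k)(q) = q^m · R^♭(q^{−1}), i.e. in ℚ(q) one has q·E^♯_k(c_1,…,c_k)_q + (1 − q)·E^♯_{k−1}(c_2,…,c_k)_q = q^m times the rational function obtained from E^♭_k(c_1,…,c_k)_q by substituting q^{−1} for q. -/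
noncomputable section

/-!
Both sides, as functions of the list, satisfy the three-term recurrence
`F (c :: d :: L) = [c]_x · F (d :: L) - x ^ (d - 1) · F L` and agree on lists of length at most one.
For the mirrored side the recurrence comes from the symmetry `x ^ (c - 1) · [c]_{x⁻¹} = [c]_x`
of the right q-integers, and the length-one case is `x ^ c · [c]^♭_{x⁻¹} = x · [c]_x + 1 - x`.
-/

lemma zpow_sub_one_mul_qsX_inv {x : K} (hx0 : x ≠ 0) (hx1 : x ≠ 1) (c : ℤ) :
    x ^ (c - 1) * qsX x⁻¹ c = qsX x c := by
  have hx1' : 1 - x ≠ 0 := sub_ne_zero.2 hx1.symm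
  have hc : x ^ c = x ^ (c - 1) * x := by rw [← zpow_add_one₀ hx0, sub_add_cancel]
  rw [qsX, qsX, inv_zpow, hc]
  have := zpow_ne_zero (c - 1) hx0
  field_simp
  ring

lemma zpow_mul_qfX_inv {x : K} (hx0 : x ≠ 0) (hx1 : x ≠ 1) (c : ℤ) :
    x ^ c * qfX x⁻¹ c = x * qsX x c + (1 - x) := by
  have hx1' : 1 - x ≠ 0 := sub_ne_zero.2 hx1.symm
  have hc : x ^ c = x ^ (c - 1) * x := by rw [← zpow_add_one₀ hx0, sub_add_cancel]
  have hc1 : x ^ (c + 1) = x ^ (c - 1) * x * x := by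
    rw [← hc, ← zpow_add_one₀ hx0]
  rw [qfX, qsX, inv_zpow, inv_zpow, inv_zpow, hc1, hc]
  have := zpow_ne_zero (c - 1) hx0
  field_simp
  ring

def jones (x : K) : List ℤ → K
  | [] => x -- `x · E♯_0() + (1 - x) · E♯_{-1}()`
  | c :: cs => x * EsharpX x (c :: cs) + (1 - x) * EsharpX x cs

def mirrorEflat (x : K) (L : List ℤ) : K :=
  x ^ (L.sum - (L.length : ℤ) + 1) * EflatX x⁻¹ L

section

variable {x : K} (hx0 : x ≠ 0) (hx1 : x ≠ 1)
include hx0 hx1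

lemma jones_cons_cons (c d : ℤ) (L : List ℤ) :
    jones x (c :: d :: L) = qsX x c * jones x (d :: L) - x ^ (d - 1) * jones x L := by
  have hx1' : 1 - x ≠ 0 := sub_ne_zero.2 hx1.symm
  have key (n : ℤ) : (1 - x) * qsX x n = 1 - x ^ (n - 1) * x := by
    rw [qsX, mul_div_cancel₀ _ hx1', ← zpow_add_one₀ hx0, sub_add_cancel]
  cases L with
  | nil =>
    simp only [jones, EsharpX]
    linear_combination key d - key c
  | cons e L =>
    simp only [jones, EsharpX]
    linear_combination EsharpX x (e :: L) * (key d - key c)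

lemma mirrorEflat_cons_cons (c d : ℤ) (L : List ℤ) :
    mirrorEflat x (c :: d :: L)
      = qsX x c * mirrorEflat x (d :: L) - x ^ (d - 1) * mirrorEflat x L := by
  have hexp (a : ℤ) (L : List ℤ) : x ^ ((a :: L).sum - ((a :: L).length : ℤ) + 1)
      = x ^ (a - 1) * x ^ (L.sum - (L.length : ℤ) + 1) := by
    rw [← zpow_add₀ hx0]
    congr 1
    simp only [List.sum_cons, List.length_cons, Nat.cast_add, Nat.cast_one]
    ring
  rw [mirrorEflat, mirrorEflat, mirrorEflat, hexp c, hexp d, EflatX, inv_zpow,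
    ← zpow_sub_one_mul_qsX_inv hx0 hx1 c]
  have := zpow_ne_zero (c - 1) hx0
  field_simp

theorem jones_eq_mirrorEflat (L : List ℤ) : jones x L = mirrorEflat x L := by
  induction L using List.twoStepInduction with
  | nil => simp [jones, mirrorEflat, EflatX]
  | singleton c =>
    rw [jones, mirrorEflat, EsharpX, EsharpX, EflatX, List.sum_singleton, List.length_singleton,
      Nat.cast_one, sub_add_cancel, zpow_mul_qfX_inv hx0 hx1, mul_one]
  | cons_cons c d L ih₀ ih₁ =>
    rw [jones_cons_cons hx0 hx1, mirrorEflat_cons_cons hx0 hx1, ih₀, ih₁]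

end

theorem Jones_eq_qpow_mul_Eflat_inv_general (c1 : ℤ) (cs : List ℤ) :
    q * Esharp (c1 :: cs) + (1 - q) * Esharp cs
      = q ^ ((c1 :: cs).sum - ((c1 :: cs).length : ℤ) + 1)
        * EflatX q⁻¹ (c1 :: cs) :=
  jones_eq_mirrorEflat RatFunc.X_ne_zero
    (fun h => by simpa using congrArg RatFunc.intDegree h) (c1 :: cs)

/-- the normalized Jones polynomial satisfies
J(c_1,…,c_k)(q) = q^m · R^♭(q^{-1}) with m = c_1 + ⋯ + c_k − k + 1, where
R^♭ = E^♭_k(c_1,…,c_k) and substituting q^{-1} for q is evaluation of the defining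
expression at q⁻¹. -/
theorem Jones_eq_qpow_mul_Eflat_inv (c1 : ℤ) (cs : List ℤ)
    (hc1 : 2 ≤ c1) (hcs : ∀ x ∈ cs, 2 ≤ x) :
    q * Esharp (c1 :: cs) + (1 - q) * Esharp cs
      = q ^ ((c1 :: cs).sum - ((c1 :: cs).length : ℤ) + 1)
        * EflatX q⁻¹ (c1 :: cs) :=
  Jones_eq_qpow_mul_Eflat_inv_general c1 cs
end
end
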